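/- arXiv:2603.12650 — 3 statements merged into one kernel-verified Lean document; each statement's English description precedes it below -/
import Mathlib

section
/- Let N be an Orlicz function with N(0)=0, N(1)=1, and suppose there is a constant C₁ ≥ 1 such that N(s)N(t) ≤ C₁ N(st) for all 0 < s, t ≤ 1. Then the unit vector basis of the Orlicz sequence space ℓ_N is lower semi-homogeneous with constant C₁: for every n, every finite sequence a_1,...,a_n ∈ ℝ, and every family u_1,...,u_n of pairwise disjoint norm-one elements of ℓ_N, one has ‖∑_{k=1}^n a_k e_k‖_{ℓ_N} ≤ C₁ ‖∑_{k=1}^n a_k u_k‖_{ℓ_N}. -/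
open Filter Topology

/-- The Orlicz sequence space norm `‖a‖_{ℓ_N} = inf{u > 0 : ∑_k N(|a_k|/u) ≤ 1}`. -/
noncomputable def orliczNorm (N : ℝ → ℝ) (a : ℕ → ℝ) : ℝ :=
  sInf {u : ℝ | 0 < u ∧ ∑' k : ℕ, N (|a k| / u) ≤ 1}

section Aux

variable {N : ℝ → ℝ}

lemma orliczAux_nonneg (hN0 : N 0 = 0) (hmono : MonotoneOn N (Set.Ici 0))
    {x : ℝ} (hx : 0 ≤ x) : 0 ≤ N x := by
  have h := hmono (Set.mem_Ici.2 (le_refl (0:ℝ))) (Set.mem_Ici.2 hx) hx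
  simpa [hN0] using h

lemma orliczAux_mono (hmono : MonotoneOn N (Set.Ici 0))
    {x y : ℝ} (hx : 0 ≤ x) (hxy : x ≤ y) : N x ≤ N y :=
  hmono (Set.mem_Ici.2 hx) (Set.mem_Ici.2 (hx.trans hxy)) hxy

lemma orliczAux_scale (hN0 : N 0 = 0) (hconv : ConvexOn ℝ (Set.Ici 0) N)
    {x l : ℝ} (hx : 0 ≤ x) (hl0 : 0 ≤ l) (hl1 : l ≤ 1) : N (l * x) ≤ l * N x := by
  have h := hconv.2 (Set.mem_Ici.2 (le_refl (0:ℝ))) (Set.mem_Ici.2 hx)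
    (by linarith : (0:ℝ) ≤ 1 - l) hl0 (by ring)
  simpa [hN0, smul_eq_mul] using h

lemma orliczAux_ge_self (hN0 : N 0 = 0) (hN1 : N 1 = 1)
    (hconv : ConvexOn ℝ (Set.Ici 0) N) {x : ℝ} (hx : 1 ≤ x) : x ≤ N x := by
  have hx0 : 0 < x := lt_of_lt_of_le one_pos hx
  have h := orliczAux_scale hN0 hconv (x := x) (l := 1/x) hx0.le (by positivity)
    (by rw [div_le_one hx0]; exact hx)
  rw [one_div_mul_cancel (ne_of_gt hx0), hN1] at h
  have h2 := mul_le_mul_of_nonneg_left h hx0.le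
  rw [mul_one] at h2
  calc x ≤ x * (1 / x * N x) := h2
    _ = N x := by field_simp

end Aux

/-- If `N(s)N(t) ≤ C₁ N(st)` for `0 < s, t ≤ 1`, then the unit vector basis of `ℓ_N`
is lower semi-homogeneous with constant `C₁`. -/
theorem orlicz_lower_semi_homogeneous
    (N : ℝ → ℝ)
    (hN0 : N 0 = 0) (hN1 : N 1 = 1)
    (hmono : MonotoneOn N (Set.Ici 0))
    (hconv : ConvexOn ℝ (Set.Ici 0) N)
    (hcont : Continuous N)
    (htop : Filter.Tendsto N Filter.atTop Filter.atTop)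
    (C₁ : ℝ) (hC₁ : 1 ≤ C₁)
    (hmul : ∀ s t : ℝ, 0 < s → s ≤ 1 → 0 < t → t ≤ 1 → N s * N t ≤ C₁ * N (s * t))
    (n : ℕ) (a : Fin n → ℝ) (u : Fin n → ℕ → ℝ)
    (hdisj : ∀ i j, i ≠ j → ∀ m, u i m = 0 ∨ u j m = 0)
    (hnorm : ∀ i, orliczNorm N (u i) = 1) :
    orliczNorm N (fun j => ∑ k, a k * (if j = (k : ℕ) then 1 else 0)) ≤
      C₁ * orliczNorm N (fun j => ∑ k, a k * u k j) := by
  classical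
  have hC₁0 : (0:ℝ) < C₁ := lt_of_lt_of_le one_pos hC₁
  have hNN : ∀ {x : ℝ}, 0 ≤ x → 0 ≤ N x := fun hx => orliczAux_nonneg hN0 hmono hx
  have hNle : ∀ {x y : ℝ}, 0 ≤ x → x ≤ y → N x ≤ N y := fun hx hxy => orliczAux_mono hmono hx hxy
  have hbdd : ∀ f : ℕ → ℝ, BddBelow {v : ℝ | 0 < v ∧ ∑' j : ℕ, N (|f j| / v) ≤ 1} :=
    fun f => ⟨0, fun x hx => hx.1.le⟩
  have hdivmono : ∀ (x w v : ℝ), 0 ≤ x → 0 < w → w ≤ v → x / v ≤ x / w := by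
    intro x w v hx hw hwv
    rw [div_eq_mul_inv, div_eq_mul_inv]
    exact mul_le_mul_of_nonneg_left (inv_anti₀ hw hwv) hx
  -- for w < 1, the modular at scale w is summable and exceeds 1
  have hlt1 : ∀ (i : Fin n) (w : ℝ), 0 < w → w < 1 →
      Summable (fun j => N (|u i j| / w)) ∧ 1 < ∑' j : ℕ, N (|u i j| / w) := by
    intro i w hw0 hw1
    have hnotmem : ¬ (0 < w ∧ ∑' j : ℕ, N (|u i j| / w) ≤ 1) := by
      intro hmem
      have h := csInf_le (hbdd (u i)) (hmem : w ∈ {v : ℝ | 0 < v ∧ ∑' j : ℕ, N (|u i j| / v) ≤ 1})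
      rw [show sInf {v : ℝ | 0 < v ∧ ∑' j : ℕ, N (|u i j| / v) ≤ 1} = orliczNorm N (u i) from rfl,
        hnorm i] at h
      linarith
    have hgt : 1 < ∑' j : ℕ, N (|u i j| / w) := by
      by_contra hle
      push_neg at hle
      exact hnotmem ⟨hw0, hle⟩
    refine ⟨?_, hgt⟩
    by_contra hns
    rw [tsum_eq_zero_of_not_summable hns] at hgt
    linarith
  -- summability at every positive scale
  have hsummable : ∀ (i : Fin n) (v : ℝ), 0 < v → Summable (fun j => N (|u i j| / v)) := by
    intro i v hv
    have hw0 : 0 < min v 1 / 2 := by positivity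
    have hw1 : min v 1 / 2 < 1 := by
      have := min_le_right v 1; linarith
    have hwv : min v 1 / 2 ≤ v := by
      have := min_le_left v 1; linarith
    refine ((hlt1 i _ hw0 hw1).1).of_nonneg_of_le (fun j => hNN (by positivity)) (fun j => ?_)
    exact hNle (by positivity) (hdivmono _ _ _ (abs_nonneg _) hw0 hwv)
  have hSne : ∀ i : Fin n, {v : ℝ | 0 < v ∧ ∑' j : ℕ, N (|u i j| / v) ≤ 1}.Nonempty := by
    intro i
    by_contra h
    rw [Set.not_nonempty_iff_eq_empty] at h
    have h1 : orliczNorm N (u i) = 0 := by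
      rw [show orliczNorm N (u i) = sInf {v : ℝ | 0 < v ∧ ∑' j : ℕ, N (|u i j| / v) ≤ 1} from rfl,
        h, Real.sInf_empty]
    rw [hnorm i] at h1
    norm_num at h1
  -- modular ≤ 1 at every scale > 1
  have htsum_le_one : ∀ (i : Fin n) (v : ℝ), 1 < v → ∑' j : ℕ, N (|u i j| / v) ≤ 1 := by
    intro i v hv
    have hlt : sInf {w : ℝ | 0 < w ∧ ∑' j : ℕ, N (|u i j| / w) ≤ 1} < v := by
      rw [show sInf {w : ℝ | 0 < w ∧ ∑' j : ℕ, N (|u i j| / w) ≤ 1} = orliczNorm N (u i) from rfl,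
        hnorm i]
      exact hv
    obtain ⟨v₀, hv₀mem, hv₀lt⟩ := (csInf_lt_iff (hbdd (u i)) (hSne i)).1 hlt
    obtain ⟨hv₀pos, hv₀sum⟩ := hv₀mem
    calc ∑' j : ℕ, N (|u i j| / v)
        ≤ ∑' j : ℕ, N (|u i j| / v₀) :=
          Summable.tsum_le_tsum (fun j => hNle (by positivity) (hdivmono _ _ _ (abs_nonneg _) hv₀pos hv₀lt.le))
            (hsummable i v (by linarith)) (hsummable i v₀ hv₀pos)
      _ ≤ 1 := hv₀sum
  -- coordinates bounded by one
  have hubound : ∀ (i : Fin n) (j : ℕ), |u i j| ≤ 1 := by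
    intro i j
    by_contra h
    push_neg at h
    set v := (1 + |u i j|) / 2 with hvdef
    have hv1 : 1 < v := by rw [hvdef]; linarith
    have hvlt : v < |u i j| := by rw [hvdef]; linarith
    have hterm : N (|u i j| / v) ≤ ∑' j' : ℕ, N (|u i j'| / v) :=
      Summable.le_tsum (hsummable i v (by linarith)) j (fun j' _ => hNN (by positivity))
    have h1 : N (|u i j| / v) ≤ 1 := hterm.trans (htsum_le_one i v hv1)
    have hgt : 1 < |u i j| / v := (one_lt_div (by linarith)).2 hvlt
    have h2 := orliczAux_ge_self hN0 hN1 hconv hgt.le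
    linarith
  -- the modular at scale 1 is at least 1 (dominated convergence)
  have hS1 : ∀ i : Fin n, 1 ≤ ∑' j : ℕ, N (|u i j|) := by
    intro i
    have hwhalf : ∀ m : ℕ, (1:ℝ)/2 ≤ 1 - 1/((m:ℝ)+2) := by
      intro m
      have hm0 : (0:ℝ) ≤ (m:ℝ) := Nat.cast_nonneg m
      have h2 : (2:ℝ) ≤ (m:ℝ) + 2 := by linarith
      have := one_div_le_one_div_of_le two_pos h2
      linarith
    have hwpos : ∀ m : ℕ, (0:ℝ) < 1 - 1/((m:ℝ)+2) := fun m => lt_of_lt_of_le one_half_pos (hwhalf m)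
    have hwlt : ∀ m : ℕ, 1 - 1/((m:ℝ)+2) < 1 := by
      intro m
      have : (0:ℝ) < 1/((m:ℝ)+2) := by positivity
      linarith
    have key : Tendsto (fun m : ℕ => ∑' j : ℕ, N (|u i j| / (1 - 1/((m:ℝ)+2)))) atTop
        (𝓝 (∑' j : ℕ, N (|u i j|))) := by
      apply tendsto_tsum_of_dominated_convergence
        (bound := fun j => N (|u i j| / (1/2)))
      · exact hsummable i (1/2) one_half_pos
      · intro j
        have hden : Tendsto (fun m : ℕ => 1 - 1/((m:ℝ)+2)) atTop (𝓝 1) := by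
          have h1 : Tendsto (fun m : ℕ => ((m:ℝ)+2)) atTop atTop :=
            tendsto_atTop_add_const_right _ 2 tendsto_natCast_atTop_atTop
          have h2 : Tendsto (fun m : ℕ => 1/((m:ℝ)+2)) atTop (𝓝 0) := by
            simp only [one_div]; exact h1.inv_tendsto_atTop
          have h3 := (tendsto_const_nhds (x := (1:ℝ)) (f := atTop (α := ℕ))).sub h2
          simpa using h3
        have hquot : Tendsto (fun m : ℕ => |u i j| / (1 - 1/((m:ℝ)+2))) atTop (𝓝 (|u i j|)) := by
          have this : Tendsto (fun m : ℕ => |u i j| / (1 - 1/((m:ℝ)+2))) atTop (𝓝 (|u i j| / 1)) :=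
            (tendsto_const_nhds (x := |u i j|) (f := atTop (α := ℕ))).div hden one_ne_zero
          simpa using this
        exact (hcont.tendsto _).comp hquot
      · apply Filter.Eventually.of_forall
        intro m j
        rw [Real.norm_eq_abs,
          abs_of_nonneg (hNN (div_nonneg (abs_nonneg _) (hwpos m).le))]
        exact hNle (div_nonneg (abs_nonneg _) (hwpos m).le)
          (hdivmono _ _ _ (abs_nonneg _) one_half_pos (hwhalf m))
    exact ge_of_tendsto key (Filter.Eventually.of_forall fun m =>
      ((hlt1 i _ (hwpos m) (hwlt m)).2).le)
  -- notation for the two sequences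
  set b : ℕ → ℝ := fun j => ∑ k, a k * u k j with hbdef
  set c : ℕ → ℝ := fun j => ∑ k, a k * (if j = (k : ℕ) then 1 else 0) with hcdef
  -- pointwise identity from disjointness
  have hpt : ∀ (j : ℕ) (v : ℝ), N (|b j| / v) = ∑ k, N (|a k * u k j| / v) := by
    intro j v
    by_cases hz : ∀ k, a k * u k j = 0
    · have hb0 : b j = 0 := Finset.sum_eq_zero (fun k _ => hz k)
      rw [hb0]
      have : ∑ k, N (|a k * u k j| / v) = 0 :=
        Finset.sum_eq_zero (fun k _ => by rw [hz k]; simp [hN0])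
      rw [this]
      simp [hN0]
    · push_neg at hz
      obtain ⟨k₀, hk₀⟩ := hz
      have hzero : ∀ k, k ≠ k₀ → a k * u k j = 0 := by
        intro k hk
        rcases hdisj k k₀ hk j with h | h
        · rw [h, mul_zero]
        · exact absurd (by rw [h, mul_zero]) hk₀
      have hbj : b j = a k₀ * u k₀ j :=
        Finset.sum_eq_single k₀ (fun k _ hk => hzero k hk) (fun h => absurd (Finset.mem_univ _) h)
      have h1 : ∑ k, N (|a k * u k j| / v) = N (|a k₀ * u k₀ j| / v) :=
        Finset.sum_eq_single k₀ (fun k _ hk => by rw [hzero k hk]; simp [hN0])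
          (fun h => absurd (Finset.mem_univ _) h)
      rw [hbj, h1]
  -- summability of each piece and of b
  have hsummk : ∀ (k : Fin n) (v : ℝ), 0 < v → Summable (fun j => N (|a k * u k j| / v)) := by
    intro k v hv
    by_cases hak : a k = 0
    · simp only [hak, zero_mul, abs_zero, zero_div, hN0]
      exact summable_zero
    · have hak0 : 0 < |a k| := abs_pos.2 hak
      have h := hsummable k (v / |a k|) (by positivity)
      have heq : (fun j => N (|u k j| / (v / |a k|))) = fun j => N (|a k * u k j| / v) := by
        funext j
        congr 1
        rw [abs_mul]
        field_simp
      rw [heq] at h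
      exact h
  have hsummb : ∀ v : ℝ, 0 < v → Summable (fun j => N (|b j| / v)) := by
    intro v hv
    have h : Summable (fun j => ∑ k, N (|a k * u k j| / v)) :=
      summable_sum (fun k _ => hsummk k v hv)
    exact h.congr (fun j => (hpt j v).symm)
  -- main estimate: any admissible v for b gives C₁ v admissible for c
  have hmain : ∀ v : ℝ, 0 < v → ∑' j : ℕ, N (|b j| / v) ≤ 1 →
      orliczNorm N c ≤ C₁ * v := by
    intro v hv0 hvsum
    have hkey : ∀ k : Fin n, N (|a k| / v) ≤ C₁ * ∑' j : ℕ, N (|a k * u k j| / v) := by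
      intro k
      by_cases hak : a k = 0
      · simp only [hak, abs_zero, zero_div, hN0]
        exact mul_nonneg hC₁0.le (tsum_nonneg fun j => hNN (by positivity))
      · have hak0 : 0 < |a k| := abs_pos.2 hak
        have hTle : ∑' j : ℕ, N (|a k * u k j| / v) ≤ 1 := by
          refine le_trans (Summable.tsum_le_tsum (fun j => ?_) (hsummk k v hv0) (hsummb v hv0)) hvsum
          rw [hpt j v]
          exact Finset.single_le_sum (f := fun k' => N (|a k' * u k' j| / v))
            (fun k' _ => hNN (div_nonneg (abs_nonneg _) hv0.le)) (Finset.mem_univ k)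
        have hav : |a k| ≤ v := by
          have heq : (fun j => N (|u k j| / (v / |a k|))) = fun j => N (|a k * u k j| / v) := by
            funext j
            congr 1
            rw [abs_mul]
            field_simp
          have hmem : v / |a k| ∈ {w : ℝ | 0 < w ∧ ∑' j : ℕ, N (|u k j| / w) ≤ 1} := by
            refine ⟨by positivity, ?_⟩
            rw [show (∑' j : ℕ, N (|u k j| / (v / |a k|))) = ∑' j : ℕ, N (|a k * u k j| / v) from
              by rw [heq]]
            exact hTle
          have h := csInf_le (hbdd (u k)) hmem
          rw [show sInf {w : ℝ | 0 < w ∧ ∑' j : ℕ, N (|u k j| / w) ≤ 1} = orliczNorm N (u k)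
            from rfl, hnorm k] at h
          rw [le_div_iff₀ hak0] at h
          linarith
        have hs0 : 0 < |a k| / v := by positivity
        have hs1 : |a k| / v ≤ 1 := (div_le_one hv0).2 hav
        have hjle : ∀ j, N (|a k| / v) * N (|u k j|) ≤ C₁ * N (|a k * u k j| / v) := by
          intro j
          by_cases huj : u k j = 0
          · simp [huj, hN0]
          · have ht0 : 0 < |u k j| := abs_pos.2 huj
            have h := hmul (|a k| / v) (|u k j|) hs0 hs1 ht0 (hubound k j)
            have heq : |a k| / v * |u k j| = |a k * u k j| / v := by
              rw [abs_mul]; ring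
            rwa [heq] at h
        have hsummu1 : Summable (fun j => N (|u k j|)) :=
          (hsummable k 1 one_pos).congr (fun j => by rw [div_one])
        have hsum2 : N (|a k| / v) * ∑' j : ℕ, N (|u k j|) ≤
            C₁ * ∑' j : ℕ, N (|a k * u k j| / v) := by
          rw [← tsum_mul_left, ← tsum_mul_left]
          exact Summable.tsum_le_tsum hjle (hsummu1.mul_left _) ((hsummk k v hv0).mul_left _)
        calc N (|a k| / v) = N (|a k| / v) * 1 := (mul_one _).symm
          _ ≤ N (|a k| / v) * ∑' j : ℕ, N (|u k j|) :=
              mul_le_mul_of_nonneg_left (hS1 k) (hNN hs0.le)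
          _ ≤ C₁ * ∑' j : ℕ, N (|a k * u k j| / v) := hsum2
    have htotal : ∑ k, N (|a k| / (C₁ * v)) ≤ 1 := by
      have h1 : ∀ k : Fin n, N (|a k| / (C₁ * v)) ≤ (1/C₁) * N (|a k| / v) := by
        intro k
        have heq : |a k| / (C₁ * v) = (1/C₁) * (|a k| / v) := by field_simp
        rw [heq]
        exact orliczAux_scale hN0 hconv (by positivity) (by positivity)
          (by rw [div_le_one hC₁0]; exact hC₁)
      calc ∑ k, N (|a k| / (C₁ * v))
          ≤ ∑ k, (1/C₁) * N (|a k| / v) := Finset.sum_le_sum (fun k _ => h1 k)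
        _ ≤ ∑ k, (1/C₁) * (C₁ * ∑' j : ℕ, N (|a k * u k j| / v)) :=
            Finset.sum_le_sum (fun k _ => mul_le_mul_of_nonneg_left (hkey k) (by positivity))
        _ = ∑ k, ∑' j : ℕ, N (|a k * u k j| / v) := by
            apply Finset.sum_congr rfl
            intro k _
            field_simp
        _ = ∑' j : ℕ, ∑ k, N (|a k * u k j| / v) := (Summable.tsum_finsetSum (fun k _ => hsummk k v hv0)).symm
        _ = ∑' j : ℕ, N (|b j| / v) := tsum_congr (fun j => (hpt j v).symm)
        _ ≤ 1 := hvsum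
    have hcsum : ∑' j : ℕ, N (|c j| / (C₁ * v)) = ∑ k, N (|a k| / (C₁ * v)) := by
      have hczero : ∀ j : ℕ, j ∉ Finset.range n → N (|c j| / (C₁ * v)) = 0 := by
        intro j hj
        have hc0 : c j = 0 := by
          apply Finset.sum_eq_zero
          intro k _
          rw [if_neg, mul_zero]
          intro h
          exact hj (Finset.mem_range.2 (h ▸ k.isLt))
        rw [hc0]
        simp [hN0]
      rw [tsum_eq_sum hczero,
        ← Fin.sum_univ_eq_sum_range (fun j => N (|c j| / (C₁ * v))) n]
      apply Finset.sum_congr rfl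
      intro k _
      have hck : c (k : ℕ) = a k := by
        have h1 : ∑ k', a k' * (if (k:ℕ) = (k':ℕ) then 1 else 0) = a k *
            (if (k:ℕ) = (k:ℕ) then 1 else 0) :=
          Finset.sum_eq_single k
            (fun k' _ hk' => by
              rw [if_neg (fun h => hk' (Fin.val_injective h).symm), mul_zero])
            (fun h => absurd (Finset.mem_univ _) h)
        rw [show c (k:ℕ) = ∑ k', a k' * (if (k:ℕ) = (k':ℕ) then 1 else 0) from rfl, h1,
          if_pos rfl, mul_one]
      rw [hck]
    have hmemc : C₁ * v ∈ {w : ℝ | 0 < w ∧ ∑' j : ℕ, N (|c j| / w) ≤ 1} :=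
      ⟨by positivity, by rw [hcsum]; exact htotal⟩
    exact csInf_le (hbdd c) hmemc
  -- the admissible set for b is nonempty
  have hSbne : {v : ℝ | 0 < v ∧ ∑' j : ℕ, N (|b j| / v) ≤ 1}.Nonempty := by
    rcases Nat.eq_zero_or_pos n with hn | hn
    · refine ⟨1, one_pos, ?_⟩
      have hb0 : ∀ j, b j = 0 := by
        intro j
        apply Finset.sum_eq_zero
        intro k _
        exact absurd k.isLt (by omega)
      have : (fun j : ℕ => N (|b j| / 1)) = fun _ => 0 := by
        funext j
        rw [hb0 j]
        simp [hN0]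
      rw [this]
      simp
    · have hn0 : (0:ℝ) < n := Nat.cast_pos.2 hn
      have hn1 : (1:ℝ) ≤ n := Nat.one_le_cast.2 hn
      set A : ℝ := 1 + ∑ k, |a k| with hAdef
      have hA1 : 1 ≤ A := by
        have : 0 ≤ ∑ k, |a k| := Finset.sum_nonneg fun k _ => abs_nonneg _
        rw [hAdef]; linarith
      have hA0 : 0 < A := lt_of_lt_of_le one_pos hA1
      set v₀ : ℝ := 2 * n * A with hv₀def
      have hv₀pos : 0 < v₀ := by rw [hv₀def]; positivity
      refine ⟨v₀, hv₀pos, ?_⟩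
      have hper : ∀ k : Fin n, ∑' j : ℕ, N (|a k * u k j| / v₀) ≤ 1 / n := by
        intro k
        have hstep : ∀ j, N (|a k * u k j| / v₀) ≤ (1/(n:ℝ)) * N (|u k j| / 2) := by
          intro j
          have hak : |a k| ≤ A := by
            have h := Finset.single_le_sum (fun k' (_ : k' ∈ Finset.univ) => abs_nonneg (a k'))
              (Finset.mem_univ k)
            rw [hAdef]; linarith
          have h1 : |a k * u k j| / v₀ ≤ (1/(n:ℝ)) * (|u k j| / 2) := by
            rw [abs_mul, hv₀def]
            calc |a k| * |u k j| / (2 * n * A)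
                ≤ A * |u k j| / (2 * n * A) := by
                  rw [div_le_div_iff_of_pos_right (by positivity : (0:ℝ) < 2 * (n:ℝ) * A)]
                  exact mul_le_mul_of_nonneg_right hak (abs_nonneg _)
              _ = (1/(n:ℝ)) * (|u k j| / 2) := by field_simp
          calc N (|a k * u k j| / v₀) ≤ N ((1/(n:ℝ)) * (|u k j| / 2)) :=
              hNle (by positivity) h1
            _ ≤ (1/(n:ℝ)) * N (|u k j| / 2) :=
              orliczAux_scale hN0 hconv (by positivity) (by positivity)
                (by rw [div_le_one hn0]; exact hn1)
        calc ∑' j : ℕ, N (|a k * u k j| / v₀)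
            ≤ ∑' j : ℕ, (1/(n:ℝ)) * N (|u k j| / 2) :=
              Summable.tsum_le_tsum hstep (hsummk k v₀ hv₀pos) ((hsummable k 2 two_pos).mul_left _)
          _ = (1/(n:ℝ)) * ∑' j : ℕ, N (|u k j| / 2) := tsum_mul_left
          _ ≤ (1/(n:ℝ)) * 1 :=
              mul_le_mul_of_nonneg_left (htsum_le_one k 2 one_lt_two) (by positivity)
          _ = 1 / n := mul_one _
      calc ∑' j : ℕ, N (|b j| / v₀)
          = ∑' j : ℕ, ∑ k, N (|a k * u k j| / v₀) := tsum_congr (fun j => hpt j v₀)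
        _ = ∑ k, ∑' j : ℕ, N (|a k * u k j| / v₀) := Summable.tsum_finsetSum (fun k _ => hsummk k v₀ hv₀pos)
        _ ≤ ∑ _k : Fin n, 1 / (n:ℝ) := Finset.sum_le_sum (fun k _ => hper k)
        _ = 1 := by
            rw [Finset.sum_const, Finset.card_univ, Fintype.card_fin, nsmul_eq_mul]
            field_simp
  -- conclude
  have hfinal : orliczNorm N c / C₁ ≤ sInf {v : ℝ | 0 < v ∧ ∑' j : ℕ, N (|b j| / v) ≤ 1} := by
    apply le_csInf hSbne
    intro v hv
    rw [div_le_iff₀ hC₁0, mul_comm]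
    exact hmain v hv.1 hv.2
  have hb_eq : orliczNorm N b = sInf {v : ℝ | 0 < v ∧ ∑' j : ℕ, N (|b j| / v) ≤ 1} := rfl
  rw [← hb_eq] at hfinal
  calc orliczNorm N c = C₁ * (orliczNorm N c / C₁) := by field_simp
    _ ≤ C₁ * orliczNorm N b := mul_le_mul_of_nonneg_left hfinal hC₁0.le
end

section
/- Let 1 ≤ q < ∞ and let w be a nonincreasing positive sequence with w_1 = 1 and partial sums S_n. If there is a constant C > 0 such that S_n ≤ C·l^{-1}·S_{ln} for all n, l ∈ ℕ (i.e., condition (3.2) with μ = 1/q and exponent qμ = 1), then w is equivalent to a constant sequence: there is c > 0 with w_k ≥ c for all k. -/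
/-- If the partial sums of a nonincreasing positive sequence `w` with `w_1 = 1` satisfy
`S_n ≤ C l⁻¹ S_{ln}` for all `n, l ≥ 1`, then `w` is bounded below by a positive constant. -/
theorem lorentz_weight_equivalent_to_constant
    (q : ℝ) (hq : 1 ≤ q)
    (w : ℕ → ℝ) (hw : ∀ k, 0 < w k) (hdec : Antitone w) (hw0 : w 0 = 1)
    (C : ℝ) (hC : 0 < C)
    (h : ∀ n l : ℕ, 1 ≤ n → 1 ≤ l →
      ∑ k ∈ Finset.range n, w k ≤
        C * (l : ℝ)⁻¹ * ∑ k ∈ Finset.range (l * n), w k) :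
    ∃ c : ℝ, 0 < c ∧ ∀ k, c ≤ w k := by
  refine ⟨C⁻¹, by positivity, fun m => ?_⟩
  -- Step 1: partial sums are bounded below: l/C ≤ S_l for l ≥ 1
  have hS : ∀ l : ℕ, 1 ≤ l → (l : ℝ) / C ≤ ∑ k ∈ Finset.range l, w k := by
    intro l hl
    have := h 1 l le_rfl hl
    simp only [Finset.range_one, Finset.sum_singleton, hw0, mul_one] at this
    have hl0 : (0:ℝ) < l := by exact_mod_cast hl
    rw [div_le_iff₀ hC]
    calc (l : ℝ) = l * 1 := by ring
      _ ≤ l * (C * (l:ℝ)⁻¹ * ∑ k ∈ Finset.range l, w k) := by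
          apply mul_le_mul_of_nonneg_left this hl0.le
      _ = (∑ k ∈ Finset.range l, w k) * C := by field_simp
  -- Step 2: key inequality for l > m
  have key : ∀ l : ℕ, m < l → (l : ℝ) / C ≤ m + ((l : ℝ) - m) * w m := by
    intro l hml
    have h1 : ∑ k ∈ Finset.range l, w k
        = ∑ k ∈ Finset.range m, w k + ∑ k ∈ Finset.Ico m l, w k := by
      rw [Finset.range_eq_Ico, Finset.range_eq_Ico]
      exact (Finset.sum_Ico_consecutive _ (Nat.zero_le m) hml.le).symm
    have h2 : ∑ k ∈ Finset.range m, w k ≤ m := by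
      calc ∑ k ∈ Finset.range m, w k ≤ ∑ k ∈ Finset.range m, w 0 :=
            Finset.sum_le_sum fun k _ => hdec (Nat.zero_le k)
        _ = m := by simp [hw0]
    have h3 : ∑ k ∈ Finset.Ico m l, w k ≤ ((l : ℝ) - m) * w m := by
      calc ∑ k ∈ Finset.Ico m l, w k ≤ ∑ k ∈ Finset.Ico m l, w m :=
            Finset.sum_le_sum fun k hk => hdec (Finset.mem_Ico.mp hk).1
        _ = ((l - m : ℕ) : ℝ) * w m := by
            rw [Finset.sum_const, Nat.card_Ico, nsmul_eq_mul]
        _ = ((l : ℝ) - m) * w m := by rw [Nat.cast_sub hml.le]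
    have h4 := hS l (Nat.one_le_iff_ne_zero.mpr (by omega))
    linarith
  -- Step 3: take l → ∞
  have hf : Filter.Tendsto
      (fun l : ℕ => C⁻¹ + (m * (C⁻¹ - 1)) / ((l : ℝ) - m)) Filter.atTop
      (nhds C⁻¹) := by
    have : Filter.Tendsto (fun l : ℕ => (m * (C⁻¹ - 1)) / ((l : ℝ) - m))
        Filter.atTop (nhds 0) := by
      apply Filter.Tendsto.div_atTop tendsto_const_nhds
      exact Filter.tendsto_atTop_add_const_right _ _ tendsto_natCast_atTop_atTop
    simpa using Filter.Tendsto.const_add C⁻¹ this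
  refine le_of_tendsto hf ?_
  filter_upwards [Filter.eventually_ge_atTop (m + 1)] with l hl
  have hml : m < l := hl
  have hd : (0:ℝ) < (l : ℝ) - m := by
    have : (m : ℝ) < l := by exact_mod_cast hml
    linarith
  have hk := key l hml
  have heq : C⁻¹ + (m : ℝ) * (C⁻¹ - 1) / ((l : ℝ) - m)
      = ((l : ℝ) / C - m) / ((l : ℝ) - m) := by
    field_simp
    ring
  rw [heq, div_le_iff₀ hd]
  nlinarith
end

section
/- Let X be a Banach lattice. If there exists C > 0 such that for all n ∈ ℕ, all pairwise disjoint norm-one families x_1,...,x_n in X, and all scalars a_i, ‖∑ a_i x_i‖_X ≤ C max_i |a_i|, then the optimal upper space X_U equals ℓ∞ with equivalent norms: C^{-1}‖a‖_{ℓ∞} ≤ ‖a‖_{X_U} ≤ C‖a‖_{ℓ∞} for all bounded sequences a. Equivalently, if sup_n sup{‖∑_{k=1}^n x_k‖_X : x_k pairwise disjoint, norm one} < ∞, then X_U = ℓ∞. -/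
section Aux
variable {X : Type*} [NormedAddCommGroup X] [Lattice X] [IsOrderedAddMonoid X] [HasSolidNorm X]

lemma riesz_inf_add (a b c : X) (ha : 0 ≤ a) (hb : 0 ≤ b) (hc : 0 ≤ c) :
    a ⊓ (b + c) ≤ a ⊓ b + a ⊓ c := by
  have e : a ⊓ b + a ⊓ c = ((a + a) ⊓ (b + a)) ⊓ ((a + c) ⊓ (b + c)) := by
    rw [add_inf, inf_add, inf_add]
  rw [e]
  refine le_inf (le_inf ?_ ?_) (le_inf ?_ inf_le_right)
  · exact inf_le_left.trans (le_add_of_nonneg_left ha)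
  · exact inf_le_left.trans (le_add_of_nonneg_left hb)
  · exact inf_le_left.trans (le_add_of_nonneg_right hc)

lemma riesz_inf_sum {ι : Type*} (s : Finset ι) (a : X) (f : ι → X) (ha : 0 ≤ a)
    (hf : ∀ i ∈ s, 0 ≤ f i) : a ⊓ ∑ i ∈ s, f i ≤ ∑ i ∈ s, a ⊓ f i := by
  induction s using Finset.cons_induction with
  | empty => simpa using inf_le_right
  | cons i s hi ih =>
    rw [Finset.sum_cons, Finset.sum_cons]
    refine (riesz_inf_add a _ _ ha (hf i (Finset.mem_cons_self i s))
      (Finset.sum_nonneg fun j hj => hf j (Finset.mem_cons_of_mem hj))).trans ?_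
    exact add_le_add le_rfl (ih fun j hj => hf j (Finset.mem_cons_of_mem hj))

lemma inf_nsmul_zero (n : ℕ) (u v : X) (hu : 0 ≤ u) (hv : 0 ≤ v) (h : u ⊓ v = 0) :
    (n • u) ⊓ v = 0 := by
  refine le_antisymm ?_ (le_inf (nsmul_nonneg hu n) hv)
  have h1 : (n • u) ⊓ v ≤ v ⊓ ∑ _i ∈ Finset.range n, u := by
    rw [inf_comm]; simp
  have h2 : v ⊓ u = 0 := by rw [inf_comm]; exact h
  refine (h1.trans (riesz_inf_sum _ v _ hv fun _ _ => hu)).trans_eq ?_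
  simp [h2]

lemma inf_nsmul_nsmul_zero (n m : ℕ) (u v : X) (hu : 0 ≤ u) (hv : 0 ≤ v) (h : u ⊓ v = 0) :
    (n • u) ⊓ (m • v) = 0 := by
  have h1 : (n • u) ⊓ v = 0 := inf_nsmul_zero n u v hu hv h
  rw [inf_comm]
  exact inf_nsmul_zero m v (n • u) hv (nsmul_nonneg hu n) (by rw [inf_comm]; exact h1)

lemma abs_sum_le' {ι : Type*} (s : Finset ι) (f : ι → X) :
    |∑ i ∈ s, f i| ≤ ∑ i ∈ s, |f i| := by
  induction s using Finset.cons_induction with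
  | empty => simp
  | cons i s hi ih =>
    rw [Finset.sum_cons, Finset.sum_cons]
    exact (abs_add_le _ _).trans (add_le_add le_rfl ih)

lemma norm_le_norm_sum_of_disjoint {n : ℕ} (y : Fin n → X)
    (hd : ∀ i j, i ≠ j → |y i| ⊓ |y j| = 0) (k : Fin n) : ‖y k‖ ≤ ‖∑ i, y i‖ := by
  apply HasSolidNorm.solid
  set A := |∑ i, y i| with hA'
  set B := ∑ i ∈ Finset.univ.erase k, |y i| with hB'
  have hA : 0 ≤ A := abs_nonneg _
  have hB : 0 ≤ B := Finset.sum_nonneg fun _ _ => abs_nonneg _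
  have hyk : y k = (∑ i, y i) - ∑ i ∈ Finset.univ.erase k, y i := by
    rw [eq_sub_iff_add_eq, Finset.add_sum_erase _ _ (Finset.mem_univ k)]
  have h1 : |y k| ≤ A + B := by
    calc |y k| = |(∑ i, y i) + -(∑ i ∈ Finset.univ.erase k, y i)| := by
          rw [← sub_eq_add_neg, ← hyk]
    _ ≤ A + |∑ i ∈ Finset.univ.erase k, y i| := by
          refine (abs_add_le _ _).trans ?_; rw [abs_neg]
    _ ≤ A + B := add_le_add le_rfl (abs_sum_le' _ _)
  calc |y k| = |y k| ⊓ (A + B) := (inf_eq_left.mpr h1).symm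
  _ ≤ |y k| ⊓ A + |y k| ⊓ B := riesz_inf_add _ _ _ (abs_nonneg _) hA hB
  _ ≤ A + 0 := by
      refine add_le_add inf_le_right ?_
      refine (riesz_inf_sum _ _ _ (abs_nonneg _) fun _ _ => abs_nonneg _).trans ?_
      refine le_of_eq (Finset.sum_eq_zero fun i hik => ?_)
      exact hd k i (Ne.symm (Finset.ne_of_mem_erase hik))
  _ = A := add_zero A

lemma abs_sub_of_disjoint (u v : X) (hu : 0 ≤ u) (hv : 0 ≤ v) (h : u ⊓ v = 0) :
    |u - v| = u + v := by
  refine le_antisymm ?_ ?_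
  · calc |u - v| = |u + -v| := by rw [sub_eq_add_neg]
    _ ≤ |u| + |-v| := abs_add_le _ _
    _ = u + v := by rw [abs_neg, abs_of_nonneg hu, abs_of_nonneg hv]
  · have hsum : u + v = u ⊔ v := by
      rw [← inf_add_sup u v, h, zero_add]
    rw [hsum]
    refine sup_le ?_ ?_
    · have hu2 : u - (u ⊓ v) = (u - u) ⊔ (u - v) := sub_inf u v u
      rw [h, sub_zero, sub_self] at hu2
      calc u = 0 ⊔ (u - v) := hu2
      _ ≤ |u - v| := sup_le (abs_nonneg _) (le_abs_self _)
    · have hv2 : v - (v ⊓ u) = (v - v) ⊔ (v - u) := sub_inf v u v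
      rw [inf_comm, h, sub_zero, sub_self] at hv2
      calc v = 0 ⊔ (v - u) := hv2
      _ ≤ |u - v| := by
          refine sup_le (abs_nonneg _) ?_
          rw [abs_sub_comm]
          exact le_abs_self _

lemma abs_nsmul_lattice (n : ℕ) (a : X) : |n • a| = n • |a| := by
  have hd : (n • a⁺) ⊓ (n • a⁻) = 0 :=
    inf_nsmul_nsmul_zero n n _ _ (posPart_nonneg a) (negPart_nonneg a)
      (posPart_inf_negPart_eq_zero a)
  calc |n • a| = |n • a⁺ - n • a⁻| := by rw [← nsmul_sub, posPart_sub_negPart]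
  _ = n • a⁺ + n • a⁻ :=
      abs_sub_of_disjoint _ _ (nsmul_nonneg (posPart_nonneg a) n)
        (nsmul_nonneg (negPart_nonneg a) n) hd
  _ = n • (a⁺ + a⁻) := by rw [nsmul_add]
  _ = n • |a| := by rw [posPart_add_negPart]

lemma abs_zsmul' (m : ℤ) (x : X) : |m • x| = m.natAbs • |x| := by
  rcases Int.natAbs_eq m with he | he
  · conv_lhs => rw [he]
    rw [natCast_zsmul, abs_nsmul_lattice]
  · conv_lhs => rw [he]
    rw [neg_zsmul, abs_neg, natCast_zsmul, abs_nsmul_lattice]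

variable [NormedSpace ℝ X]

set_option maxHeartbeats 1000000 in
lemma disjoint_smul_left (x y : X) (h : |x| ⊓ |y| = 0) (t : ℝ) :
    |t • x| ⊓ |y| = 0 := by
  have hcont : Continuous fun t : ℝ => |t • x| ⊓ |y| := by
    have h1 : Continuous fun t : ℝ => t • x := continuous_id.smul continuous_const
    have h2 : Continuous fun t : ℝ => |t • x| := by
      simpa [abs] using h1.sup h1.neg
    exact h2.inf continuous_const
  have hq : ∀ q : ℚ, |((q : ℝ)) • x| ⊓ |y| = 0 := by
    intro q
    set d := |((q : ℝ)) • x| ⊓ |y| with hd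
    have hd0 : 0 ≤ d := le_inf (abs_nonneg _) (abs_nonneg _)
    have hden : (q.den : ℕ) • ((q : ℝ) • x) = q.num • x := by
      rw [← Nat.cast_smul_eq_nsmul ℝ, smul_smul, ← Int.cast_smul_eq_zsmul ℝ]
      congr 1
      have h1 : ((q * (q.den : ℚ) : ℚ) : ℝ) = ((q.num : ℚ) : ℝ) := by
        rw [Rat.mul_den_eq_num]
      push_cast at h1
      rw [mul_comm]
      exact_mod_cast h1
    have key : q.den • d ≤ 0 := by
      have hle : q.den • d ≤ (q.num.natAbs • |x|) ⊓ (q.den • |y|) := by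
        refine le_inf ?_ (nsmul_le_nsmul_right inf_le_right q.den)
        calc q.den • d ≤ q.den • |(q : ℝ) • x| := nsmul_le_nsmul_right inf_le_left q.den
        _ = |(q.den : ℕ) • ((q : ℝ) • x)| := (abs_nsmul_lattice _ _).symm
        _ = |q.num • x| := by rw [hden]
        _ = q.num.natAbs • |x| := abs_zsmul' _ _
      refine hle.trans_eq ?_
      exact inf_nsmul_nsmul_zero _ _ _ _ (abs_nonneg _) (abs_nonneg _) h
    have hdd : d ≤ q.den • d := by
      calc d = 1 • d := (one_nsmul d).symm
      _ ≤ q.den • d := nsmul_le_nsmul_left hd0 q.pos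
    exact le_antisymm (hdd.trans key) hd0
  have heq : (fun t : ℝ => |t • x| ⊓ |y|) = fun _ => (0 : X) := by
    refine Continuous.ext_on Rat.denseRange_cast hcont continuous_const ?_
    rintro _ ⟨q, rfl⟩
    exact hq q
  exact congrFun heq t

lemma disjoint_smul_smul (x y : X) (h : |x| ⊓ |y| = 0) (t s : ℝ) :
    |t • x| ⊓ |s • y| = 0 := by
  have h1 : |t • x| ⊓ |y| = 0 := disjoint_smul_left x y h t
  rw [inf_comm]
  exact disjoint_smul_left y (t • x) (by rw [inf_comm]; exact h1) s

end Aux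

set_option maxHeartbeats 1000000 in
/-- If in a Banach lattice `X` every disjoint norm-one combination is dominated by
`C max |a_i|`, then the optimal upper space `X_U` equals `ℓ∞` with equivalent norms. -/
theorem XU_eq_linfty_of_uniform_bound
    {X : Type*} [NormedAddCommGroup X] [Lattice X] [IsOrderedAddMonoid X] [HasSolidNorm X] [NormedSpace ℝ X] [CompleteSpace X]
    (hne : ∀ n : ℕ, ∃ x : Fin n → X,
      (∀ i j, i ≠ j → |x i| ⊓ |x j| = 0) ∧ ∀ i, ‖x i‖ = 1)
    (C : ℝ) (hC : 0 < C)
    (h : ∀ (n : ℕ) (x : Fin n → X) (a : Fin n → ℝ),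
      (∀ i j, i ≠ j → |x i| ⊓ |x j| = 0) → (∀ i, ‖x i‖ = 1) →
      ∀ r : ℝ, (∀ i, |a i| ≤ r) → ‖∑ i, a i • x i‖ ≤ C * r) :
    ∀ a : ℕ → ℝ, BddAbove (Set.range fun k => |a k|) →
      BddAbove {r : ℝ | ∃ (n : ℕ) (x : Fin n → X),
        (∀ i j, i ≠ j → |x i| ⊓ |x j| = 0) ∧ (∀ i, ‖x i‖ = 1) ∧
        r = ‖∑ i, a i.val • x i‖} ∧
      C⁻¹ * sSup (Set.range fun k => |a k|) ≤
        sSup {r : ℝ | ∃ (n : ℕ) (x : Fin n → X),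
          (∀ i j, i ≠ j → |x i| ⊓ |x j| = 0) ∧ (∀ i, ‖x i‖ = 1) ∧
          r = ‖∑ i, a i.val • x i‖} ∧
      sSup {r : ℝ | ∃ (n : ℕ) (x : Fin n → X),
          (∀ i j, i ≠ j → |x i| ⊓ |x j| = 0) ∧ (∀ i, ‖x i‖ = 1) ∧
          r = ‖∑ i, a i.val • x i‖} ≤ C * sSup (Set.range fun k => |a k|) := by
  intro a hb
  set M := sSup (Set.range fun k => |a k|) with hM
  set S := {r : ℝ | ∃ (n : ℕ) (x : Fin n → X),
      (∀ i j, i ≠ j → |x i| ⊓ |x j| = 0) ∧ (∀ i, ‖x i‖ = 1) ∧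
      r = ‖∑ i, a i.val • x i‖} with hS
  have haM : ∀ k, |a k| ≤ M := fun k => le_csSup hb ⟨k, rfl⟩
  have hSub : ∀ r ∈ S, r ≤ C * M := by
    rintro r ⟨n, x, hd, hn1, rfl⟩
    exact h n x (fun i => a i.val) hd hn1 M fun i => haM i.val
  have hSbdd : BddAbove S := ⟨C * M, hSub⟩
  have h0S : (0 : ℝ) ∈ S := by
    refine ⟨0, Fin.elim0, fun i => i.elim0, fun i => i.elim0, ?_⟩
    simp
  have hSne : S.Nonempty := ⟨0, h0S⟩
  -- C ≥ 1
  have hC1 : 1 ≤ C := by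
    obtain ⟨x, hd, hn1⟩ := hne 1
    have := h 1 x (fun _ => 1) hd hn1 1 (by simp)
    simpa [Fin.sum_univ_one, hn1 0] using this
  -- each |a k| ≤ sSup S
  have hkS : ∀ k : ℕ, |a k| ≤ sSup S := by
    intro k
    obtain ⟨x, hd, hn1⟩ := hne (k + 1)
    set kk : Fin (k + 1) := Fin.last k
    have hdis : ∀ i j : Fin (k + 1), i ≠ j →
        |a i.val • x i| ⊓ |a j.val • x j| = 0 := fun i j hij =>
      disjoint_smul_smul (x i) (x j) (hd i j hij) _ _
    have hmem : ‖∑ i, a i.val • x i‖ ∈ S := ⟨k + 1, x, hd, hn1, rfl⟩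
    have hle : ‖a kk.val • x kk‖ ≤ ‖∑ i, a i.val • x i‖ :=
      norm_le_norm_sum_of_disjoint (fun i => a i.val • x i) hdis kk
    have hnorm : ‖a kk.val • x kk‖ = |a k| := by
      rw [norm_smul, hn1 kk, Real.norm_eq_abs, mul_one]
      rfl
    rw [← hnorm]
    exact hle.trans (le_csSup hSbdd hmem)
  have hM0 : 0 ≤ M := (abs_nonneg (a 0)).trans (haM 0)
  have hMS : M ≤ sSup S := csSup_le ⟨|a 0|, ⟨0, rfl⟩⟩ (by rintro _ ⟨k, rfl⟩; exact hkS k)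
  refine ⟨hSbdd, ?_, csSup_le hSne hSub⟩
  have hSnn : 0 ≤ sSup S := le_csSup hSbdd h0S
  calc C⁻¹ * M ≤ 1 * M := by
        refine mul_le_mul_of_nonneg_right ?_ hM0
        rw [inv_le_one_iff₀]; right; exact hC1
  _ = M := one_mul M
  _ ≤ sSup S := hMS
end
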